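/- Let 1 < p_min ≤ p_max < ∞ and c₁, c₂ > 0, and let γ = γ(n, p_min, p_max) ≥ 1 be sufficiently large (depending only on n, p_min, p_max). Fix x₀ ∈ ℝⁿ and 0 < r̄₁ < r̄₂ ≤ 1, and define w(x) = c₁|x−x₀|^{−γ} − c₂. Then if p : ℝⁿ → (1,∞) is C¹ with p_min ≤ p ≤ p_max and ‖∇p‖_∞ sufficiently small (depending on n, p_min, p_max, r̄₁, c₁), there exists c̄ > 0 (depending on p_min, p_max, c₁) such that Δ_{p(x)} w(x) ≥ c̄ for all x with r̄₁ ≤ |x−x₀| ≤ r̄₂. -/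

import Mathlib

open scoped RealInnerProductSpace

/-- The (non-divergence form) `p(x)`-Laplacian of `w` at `x`:
`Δ_{p(x)}w(x) = |∇w(x)|^{p(x)-2} (Δw(x) + (p(x)-2)⟨D²w(x)ν,ν⟩ + ⟨∇p(x),∇w(x)⟩ log|∇w(x)|)`
with `ν = ∇w(x)/|∇w(x)|`, `Δw` = trace of the Hessian. -/
noncomputable def pLap {n : ℕ} (p w : EuclideanSpace ℝ (Fin n) → ℝ)
    (x : EuclideanSpace ℝ (Fin n)) : ℝ :=
  ‖gradient w x‖ ^ (p x - 2) *
    (LinearMap.trace ℝ (EuclideanSpace ℝ (Fin n))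
        ((fderiv ℝ (gradient w) x :
            EuclideanSpace ℝ (Fin n) →L[ℝ] EuclideanSpace ℝ (Fin n)) :
          EuclideanSpace ℝ (Fin n) →ₗ[ℝ] EuclideanSpace ℝ (Fin n)) +
      (p x - 2) *
        ⟪fderiv ℝ (gradient w) x (‖gradient w x‖⁻¹ • gradient w x),
          ‖gradient w x‖⁻¹ • gradient w x⟫ +
      ⟪gradient p x, gradient w x⟫ * Real.log ‖gradient w x‖)

open Real

/-! The barrier `w = c₁ |x - x₀|^(-γ) - c₂` is radial: `∇w = k (x - x₀)` and
`D²w = a I + b (x - x₀) ⊗ (x - x₀)`, so its `p(x)`-Laplacian is explicit. With `r = |x - x₀|` and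
`G = |∇w| = γ c₁ r^(-γ-1)`,
`Δ_{p(x)} w = G^(p-2) (γ c₁ r^(-γ-2) ((γ + 1)(p - 1) + 1 - n) + ⟨∇p, ∇w⟩ log G)`.
For `γ = n / (p_min - 1) + 1` the coefficient `(γ + 1)(p - 1) + 1 - n` is at least `1`, so on
`r ≤ 1` the Hessian part is at least `G`. On `r ≥ r̄₁` the factor `|log G|` is bounded, so a small
`‖∇p‖_∞` keeps the last term below `G / 2`, and `Δ_{p(x)} w ≥ G^(p-1) / 2 ≥ (γ c₁)^(p-1) / 2`. -/

section RadialPower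

variable {E : Type*} [NormedAddCommGroup E] [InnerProductSpace ℝ E] {x x₀ : E}

theorem hasFDerivAt_norm_sub_rpow (hx : x ≠ x₀) (s : ℝ) :
    HasFDerivAt (fun y : E ↦ ‖y - x₀‖ ^ s)
      ((s * ‖x - x₀‖ ^ (s - 2)) • innerSL ℝ (x - x₀)) x := by
  have hu : ‖x - x₀‖ ^ 2 ≠ 0 := by simpa [sub_eq_zero] using hx
  have sq_rpow (y : E) (t : ℝ) : (‖y‖ ^ 2) ^ t = ‖y‖ ^ (2 * t) := by
    rw [← Real.rpow_natCast_mul (norm_nonneg _)]; norm_num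
  have h := ((hasStrictFDerivAt_norm_sq (x - x₀)).hasFDerivAt.rpow_const (p := s / 2)
    (Or.inl hu)).comp x ((hasFDerivAt_id x).sub_const x₀)
  simp only [Function.comp_def, id, sq_rpow, mul_div_cancel₀ s two_ne_zero] at h
  refine h.congr_fderiv ?_
  ext v
  simp [two_smul]
  ring_nf

theorem hasGradientAt_mul_norm_sub_rpow_sub [CompleteSpace E] (hx : x ≠ x₀) (c s c₂ : ℝ) :
    HasGradientAt (fun y : E ↦ c * ‖y - x₀‖ ^ s - c₂)
      ((c * s * ‖x - x₀‖ ^ (s - 2)) • (x - x₀)) x := by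
  rw [hasGradientAt_iff_hasFDerivAt]
  refine (((hasFDerivAt_norm_sub_rpow hx s).const_mul c).sub_const c₂).congr_fderiv ?_
  ext v
  simp [InnerProductSpace.toDual_apply_apply]
  ring

theorem hasFDerivAt_mul_norm_sub_rpow_smul (hx : x ≠ x₀) (k s : ℝ) :
    HasFDerivAt (fun y : E ↦ (k * ‖y - x₀‖ ^ (s - 2)) • (y - x₀))
      ((k * ‖x - x₀‖ ^ (s - 2)) • ContinuousLinearMap.id ℝ E +
        ((k * (s - 2) * ‖x - x₀‖ ^ (s - 4)) • innerSL ℝ (x - x₀)).smulRight (x - x₀)) x := by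
  have h := ((hasFDerivAt_norm_sub_rpow hx (s - 2)).const_mul k).smul
    ((hasFDerivAt_id x).sub_const x₀)
  refine h.congr_fderiv ?_
  ext v
  simp [smul_smul]
  ring_nf

theorem fderiv_gradient_mul_norm_sub_rpow_sub [CompleteSpace E] (hx : x ≠ x₀) (c s c₂ : ℝ) :
    fderiv ℝ (gradient fun y : E ↦ c * ‖y - x₀‖ ^ s - c₂) x =
      (c * s * ‖x - x₀‖ ^ (s - 2)) • ContinuousLinearMap.id ℝ E +
        ((c * s * (s - 2) * ‖x - x₀‖ ^ (s - 4)) • innerSL ℝ (x - x₀)).smulRight (x - x₀) := by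
  have hgrad : (gradient fun y : E ↦ c * ‖y - x₀‖ ^ s - c₂) =ᶠ[nhds x]
      fun y ↦ (c * s * ‖y - x₀‖ ^ (s - 2)) • (y - x₀) := by
    filter_upwards [isOpen_ne.mem_nhds hx] with y hy
    exact (hasGradientAt_mul_norm_sub_rpow_sub hy c s c₂).gradient
  rw [hgrad.fderiv_eq, (hasFDerivAt_mul_norm_sub_rpow_smul hx (c * s) s).fderiv]

theorem trace_smul_id_add_smulRight_innerSL [FiniteDimensional ℝ E] (a b : ℝ) (u : E) :
    LinearMap.trace ℝ E ((a • ContinuousLinearMap.id ℝ E + (b • innerSL ℝ u).smulRight u :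
      E →L[ℝ] E) : E →ₗ[ℝ] E) = a * Module.finrank ℝ E + b * ‖u‖ ^ 2 := by
  have h : (((b • innerSL ℝ u).smulRight u : E →L[ℝ] E) : E →ₗ[ℝ] E) =
      LinearMap.smulRight ((b • innerSL ℝ u : E →L[ℝ] ℝ) : E →ₗ[ℝ] ℝ) u := rfl
  rw [ContinuousLinearMap.toLinearMap_add, map_add, h, LinearMap.trace_smulRight,
    ContinuousLinearMap.toLinearMap_smul, map_smul]
  simp

theorem inner_smul_id_add_smulRight_innerSL_apply (a b : ℝ) (u v : E) :
    ⟪(a • ContinuousLinearMap.id ℝ E + (b • innerSL ℝ u).smulRight u) v, v⟫ =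
      a * ‖v‖ ^ 2 + b * ⟪u, v⟫ ^ 2 := by
  simp [inner_add_left, real_inner_smul_left]
  ring

theorem norm_smul_norm_rpow_smul {u : E} (hu : u ≠ 0) (k s : ℝ) :
    ‖(k * ‖u‖ ^ (s - 2)) • u‖ = |k| * ‖u‖ ^ (s - 1) := by
  have hr : 0 < ‖u‖ := norm_pos_iff.mpr hu
  rw [norm_smul, norm_mul, Real.norm_eq_abs, Real.norm_of_nonneg (by positivity), mul_assoc,
    ← Real.rpow_add_one hr.ne']
  ring_nf

theorem inner_sq_normalize_smul {u : E} (hu : u ≠ 0) {t : ℝ} (ht : t ≠ 0) :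
    ⟪u, ‖t • u‖⁻¹ • t • u⟫ ^ 2 = ‖u‖ ^ 2 := by
  have hr : ‖u‖ ≠ 0 := norm_ne_zero_iff.mpr hu
  rw [real_inner_smul_right, real_inner_smul_right, real_inner_self_eq_norm_sq, norm_smul,
    Real.norm_eq_abs]
  field_simp
  rw [sq_abs]

theorem abs_inner_mul_log_norm_le_half {g v : E} {B : ℝ} (hB : 0 ≤ B)
    (hg : ‖g‖ ≤ 1 / (2 * (B + 1))) (hlog : |log ‖v‖| ≤ B) :
    |⟪g, v⟫ * log ‖v‖| ≤ ‖v‖ / 2 :=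
  calc |⟪g, v⟫ * log ‖v‖| ≤ ‖g‖ * ‖v‖ * B := by
        rw [abs_mul]; gcongr; exact abs_real_inner_le_norm g v
    _ ≤ 1 / (2 * (B + 1)) * ‖v‖ * (B + 1) := by gcongr; linarith
    _ = ‖v‖ / 2 := by field_simp

end RadialPower

theorem pLap_mul_norm_sub_rpow_sub {n : ℕ} (p : EuclideanSpace ℝ (Fin n) → ℝ)
    {x x₀ : EuclideanSpace ℝ (Fin n)} (hx : x ≠ x₀) {c s : ℝ} (hcs : c * s ≠ 0) (c₂ : ℝ) :
    pLap p (fun y ↦ c * ‖y - x₀‖ ^ s - c₂) x =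
      ‖(c * s * ‖x - x₀‖ ^ (s - 2)) • (x - x₀)‖ ^ (p x - 2) *
        (c * s * ‖x - x₀‖ ^ (s - 2) * (n + s - 2 + (p x - 2) * (s - 1)) +
          ⟪gradient p x, (c * s * ‖x - x₀‖ ^ (s - 2)) • (x - x₀)⟫ *
            log ‖(c * s * ‖x - x₀‖ ^ (s - 2)) • (x - x₀)‖) := by
  have hu : x - x₀ ≠ 0 := sub_ne_zero.mpr hx
  have hr : 0 < ‖x - x₀‖ := norm_pos_iff.mpr hu
  have ht : c * s * ‖x - x₀‖ ^ (s - 2) ≠ 0 := mul_ne_zero hcs (by positivity)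
  have hν : ‖‖(c * s * ‖x - x₀‖ ^ (s - 2)) • (x - x₀)‖⁻¹ •
      (c * s * ‖x - x₀‖ ^ (s - 2)) • (x - x₀)‖ = 1 :=
    norm_smul_inv_norm (smul_ne_zero ht hu)
  have hpow : ‖x - x₀‖ ^ (s - 4) * ‖x - x₀‖ ^ 2 = ‖x - x₀‖ ^ (s - 2) := by
    rw [← Real.rpow_natCast, ← Real.rpow_add hr]; ring_nf
  rw [pLap, (hasGradientAt_mul_norm_sub_rpow_sub hx c s c₂).gradient,
    fderiv_gradient_mul_norm_sub_rpow_sub hx, trace_smul_id_add_smulRight_innerSL,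
    inner_smul_id_add_smulRight_innerSL_apply, inner_sq_normalize_smul hu ht, hν,
    finrank_euclideanSpace_fin]
  congr 2
  linear_combination (c * s * (s - 2) * (p x - 1)) * hpow

theorem min_rpow_le_rpow_of_mem_Icc {a s t u : ℝ} (ha : 0 < a) (hsu : s ≤ u) (hut : u ≤ t) :
    min (a ^ s) (a ^ t) ≤ a ^ u := by
  rcases le_or_gt 1 a with h | h
  · exact (min_le_left _ _).trans (rpow_le_rpow_of_exponent_le h hsu)
  · exact (min_le_right _ _).trans (rpow_le_rpow_of_exponent_ge ha h.le hut)

theorem abs_log_mul_rpow_le {a r r₁ : ℝ} (ha : 0 < a) (hr₁ : 0 < r₁) (h₁ : r₁ ≤ r) (h : r ≤ 1)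
    (s : ℝ) : |log (a * r ^ s)| ≤ |log a| + |s| * |log r₁| := by
  have hr : 0 < r := hr₁.trans_le h₁
  have hlog : |log r| ≤ |log r₁| := by
    rw [abs_of_nonpos (log_nonpos hr.le h), abs_of_nonpos (log_nonpos hr₁.le (h₁.trans h))]
    exact neg_le_neg (log_le_log hr₁ h₁)
  rw [log_mul ha.ne' (rpow_pos_of_pos hr s).ne', log_rpow hr]
  calc |log a + s * log r| ≤ |log a| + |s| * |log r| := by
        rw [← abs_mul]; exact abs_add_le _ _
    _ ≤ |log a| + |s| * |log r₁| := by gcongr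

theorem rpow_sub_one_div_two_le {G A e q : ℝ} (hG : 0 < G) (hA : G ≤ A) (he : |e| ≤ G / 2) :
    G ^ (q - 1) / 2 ≤ G ^ (q - 2) * (A + e) :=
  calc G ^ (q - 1) / 2 = G ^ (q - 2) * (G - G / 2) := by
        rw [show q - 1 = q - 2 + 1 by ring, rpow_add_one hG.ne']; ring
    _ ≤ G ^ (q - 2) * (A + e) := by
        gcongr; linarith [neg_abs_le e]

theorem barrier_norm_grad_le_hessian_term {n : ℕ} {γ c q r : ℝ} (hγ : 0 ≤ γ) (hc : 0 < c)
    (hn : n ≤ (γ + 1) * (q - 1)) (hr : 0 < r) (hr1 : r ≤ 1) :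
    γ * c * r ^ (-γ - 1) ≤ c * -γ * r ^ (-γ - 2) * (n + -γ - 2 + (q - 2) * (-γ - 1)) :=
  calc γ * c * r ^ (-γ - 1) ≤ γ * c * r ^ (-γ - 2) * 1 := by
        rw [mul_one]
        exact mul_le_mul_of_nonneg_left (rpow_le_rpow_of_exponent_ge hr hr1 (by linarith))
          (by positivity)
    _ ≤ γ * c * r ^ (-γ - 2) * ((γ + 1) * (q - 1) + 1 - n) := by gcongr; linarith
    _ = c * -γ * r ^ (-γ - 2) * (n + -γ - 2 + (q - 2) * (-γ - 1)) := by ring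

theorem stmt5_general {n : ℕ} (pmin pmax : ℝ) (h1 : 1 < pmin) :
    ∃ γ : ℝ, 1 ≤ γ ∧
      ∀ c₁ : ℝ, 0 < c₁ → ∃ cbar > (0 : ℝ),
        ∀ r₁ : ℝ, 0 < r₁ → ∃ ε₀ > (0 : ℝ),
          ∀ (c₂ : ℝ) (x₀ : EuclideanSpace ℝ (Fin n)) (r₂ : ℝ), r₁ < r₂ → r₂ ≤ 1 →
            ∀ p : EuclideanSpace ℝ (Fin n) → ℝ, ContDiff ℝ 1 p →
              (∀ x, pmin ≤ p x ∧ p x ≤ pmax) →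
              (∀ x, ‖gradient p x‖ ≤ ε₀) →
              ∀ x : EuclideanSpace ℝ (Fin n), r₁ ≤ ‖x - x₀‖ → ‖x - x₀‖ ≤ r₂ →
                cbar ≤ pLap p (fun y => c₁ * ‖y - x₀‖ ^ (-γ) - c₂) x := by
  have hpmin : 0 < pmin - 1 := sub_pos.2 h1
  set γ : ℝ := n / (pmin - 1) + 1 with hγ
  have hγ1 : 1 ≤ γ := le_add_of_nonneg_left (by positivity)
  have hγn : (n : ℝ) ≤ (γ + 1) * (pmin - 1) := by
    rw [hγ, add_assoc, add_mul, div_mul_cancel₀ _ hpmin.ne']; linarith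
  refine ⟨γ, hγ1, fun c₁ hc₁ ↦ ?_⟩
  have hγc₁ : 0 < γ * c₁ := by positivity
  refine ⟨min ((γ * c₁) ^ (pmin - 1)) ((γ * c₁) ^ (pmax - 1)) / 2, by positivity,
    fun r₁ hr₁ ↦ ?_⟩
  set B := |log (γ * c₁)| + |-γ - 1| * |log r₁|
  refine ⟨1 / (2 * (B + 1)), by positivity, ?_⟩
  intro c₂ x₀ r₂ _ hr₂ p _ hp hgp x hx₁ hx₂
  obtain ⟨hpx₁, hpx₂⟩ := hp x
  have hr : 0 < ‖x - x₀‖ := hr₁.trans_le hx₁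
  have hr1 : ‖x - x₀‖ ≤ 1 := hx₂.trans hr₂
  have hu : x - x₀ ≠ 0 := norm_pos_iff.1 hr
  rw [pLap_mul_norm_sub_rpow_sub p (sub_ne_zero.1 hu)
    (mul_ne_zero hc₁.ne' (neg_ne_zero.2 (by linarith))) c₂]
  have hv : ‖(c₁ * -γ * ‖x - x₀‖ ^ (-γ - 2)) • (x - x₀)‖ = γ * c₁ * ‖x - x₀‖ ^ (-γ - 1) := by
    rw [norm_smul_norm_rpow_smul hu, abs_mul, abs_neg, abs_of_pos hc₁,
      abs_of_pos (by linarith : 0 < γ), mul_comm c₁]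
  have hγc₁_le : γ * c₁ ≤ ‖(c₁ * -γ * ‖x - x₀‖ ^ (-γ - 2)) • (x - x₀)‖ := hv ▸
    le_mul_of_one_le_right hγc₁.le (one_le_rpow_of_pos_of_le_one_of_nonpos hr hr1 (by linarith))
  refine le_trans ?_ (rpow_sub_one_div_two_le (hγc₁.trans_le hγc₁_le)
    (hv ▸ barrier_norm_grad_le_hessian_term (by linarith) hc₁ (by nlinarith) hr hr1)
    (abs_inner_mul_log_norm_le_half (by positivity) (hgp x)
      (hv ▸ abs_log_mul_rpow_le hγc₁ hr₁ hx₁ hr1 _)))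
  gcongr
  exact (min_rpow_le_rpow_of_mem_Icc hγc₁ (by linarith) (by linarith)).trans
    (rpow_le_rpow hγc₁.le hγc₁_le (by linarith))

/-- barrier lemma. Given `1 < p_min ≤ p_max`, there exists `γ ≥ 1`
(depending only on `n, p_min, p_max`) such that for each `c₁ > 0` there is a `c̄ > 0`
(depending on `p_min, p_max, c₁`), and for each `0 < r̄₁` there is `ε₀ > 0`
(depending on `n, p_min, p_max, r̄₁, c₁`) such that for every `c₂`, `x₀`, `r̄₂` with
`r̄₁ < r̄₂ ≤ 1` and every `C¹` exponent `p` with `p_min ≤ p ≤ p_max` and `‖∇p‖_∞ ≤ ε₀`,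
the barrier `w(x) = c₁|x−x₀|^{−γ} − c₂` satisfies `Δ_{p(x)}w ≥ c̄` on the annulus
`r̄₁ ≤ |x−x₀| ≤ r̄₂`. -/
theorem stmt5 {n : ℕ} (pmin pmax : ℝ) (h1 : 1 < pmin) (h2 : pmin ≤ pmax) :
    ∃ γ : ℝ, 1 ≤ γ ∧
      ∀ c₁ : ℝ, 0 < c₁ → ∃ cbar > (0 : ℝ),
        ∀ r₁ : ℝ, 0 < r₁ → ∃ ε₀ > (0 : ℝ),
          ∀ (c₂ : ℝ) (x₀ : EuclideanSpace ℝ (Fin n)) (r₂ : ℝ), r₁ < r₂ → r₂ ≤ 1 →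
            ∀ p : EuclideanSpace ℝ (Fin n) → ℝ, ContDiff ℝ 1 p →
              (∀ x, pmin ≤ p x ∧ p x ≤ pmax) →
              (∀ x, ‖gradient p x‖ ≤ ε₀) →
              ∀ x : EuclideanSpace ℝ (Fin n), r₁ ≤ ‖x - x₀‖ → ‖x - x₀‖ ≤ r₂ →
                cbar ≤ pLap p (fun y => c₁ * ‖y - x₀‖ ^ (-γ) - c₂) x :=
  stmt5_general pmin pmax h1
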